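/- Let H be a complex inner product space and α ∈ ℂ \ {0}. Then for all x, y ∈ H, ‖x‖‖y‖ − Re[(α²/|α|²)⟨x,y⟩] ≤ (1/2)·(|Re α|·‖x−y‖ + |Im α|·‖x+y‖)² / |α|². -/

import Mathlib

/-!
Put `c = α / |α|`, a unit complex number, so that `c² ⟪x, y⟫ = ⟪conj c • x, c • y⟫` while
`conj c • x` and `c • y` have norms `‖x‖` and `‖y‖`. For any vectors `u, v`,
`‖u‖ ‖v‖ - Re ⟪u, v⟫ ≤ ‖u - v‖² / 2` by AM-GM, and
`conj c • x - c • y = (Re c) • (x - y) - (i Im c) • (x + y)` bounds `‖u - v‖` by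
`|Re c| ‖x - y‖ + |Im c| ‖x + y‖`.
-/

open ComplexConjugate

theorem norm_mul_norm_sub_re_inner_le {𝕜 E : Type*} [RCLike 𝕜] [NormedAddCommGroup E]
    [InnerProductSpace 𝕜 E] (u v : E) :
    ‖u‖ * ‖v‖ - RCLike.re (inner 𝕜 u v) ≤ ‖u - v‖ ^ 2 / 2 := by
  rw [@norm_sub_sq 𝕜]
  nlinarith [two_mul_le_add_sq ‖u‖ ‖v‖]

section ComplexModule

variable {E : Type*} [NormedAddCommGroup E] [NormedSpace ℂ E]

theorem Complex.conj_smul_sub_smul (c : ℂ) (x y : E) :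
    conj c • x - c • y = (c.re : ℂ) • (x - y) - (c.im * Complex.I) • (x + y) := by
  conv_lhs => rw [← Complex.re_add_im c]
  simp only [map_add, map_mul, Complex.conj_ofReal, Complex.conj_I]
  module

theorem Complex.norm_conj_smul_sub_smul_le (c : ℂ) (x y : E) :
    ‖conj c • x - c • y‖ ≤ |c.re| * ‖x - y‖ + |c.im| * ‖x + y‖ := by
  rw [Complex.conj_smul_sub_smul]
  refine (norm_sub_le _ _).trans_eq ?_
  rw [norm_smul, norm_smul, norm_mul, Complex.norm_I, mul_one, Complex.norm_real,
    Complex.norm_real, Real.norm_eq_abs, Real.norm_eq_abs]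

end ComplexModule

theorem norm_mul_norm_sub_re_sq_mul_inner_le {E : Type*} [NormedAddCommGroup E]
    [InnerProductSpace ℂ E] {c : ℂ} (hc : ‖c‖ = 1) (x y : E) :
    ‖x‖ * ‖y‖ - (c ^ 2 * inner ℂ x y).re ≤
      (|c.re| * ‖x - y‖ + |c.im| * ‖x + y‖) ^ 2 / 2 := by
  have h_inner : inner ℂ (conj c • x) (c • y) = c ^ 2 * inner ℂ x y := by
    rw [inner_smul_left, inner_smul_right, Complex.conj_conj]
    ring
  have h_norm_x : ‖conj c • x‖ = ‖x‖ := by rw [norm_smul, RCLike.norm_conj, hc, one_mul]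
  have h_norm_y : ‖c • y‖ = ‖y‖ := by rw [norm_smul, hc, one_mul]
  calc ‖x‖ * ‖y‖ - (c ^ 2 * inner ℂ x y).re
      = ‖conj c • x‖ * ‖c • y‖ - RCLike.re (inner ℂ (conj c • x) (c • y)) := by
        rw [h_inner, h_norm_x, h_norm_y]; rfl
    _ ≤ ‖conj c • x - c • y‖ ^ 2 / 2 := norm_mul_norm_sub_re_inner_le _ _
    _ ≤ (|c.re| * ‖x - y‖ + |c.im| * ‖x + y‖) ^ 2 / 2 := by
        gcongr
        exact Complex.norm_conj_smul_sub_smul_le c x y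

theorem stmt9 {H : Type*} [NormedAddCommGroup H] [InnerProductSpace ℂ H]
    (α : ℂ) (hα : α ≠ 0) (x y : H) :
    ‖x‖ * ‖y‖ - ((α ^ 2 / ((‖α‖ : ℂ) ^ 2)) * (inner ℂ x y : ℂ)).re ≤
      (1 / 2) * (|α.re| * ‖x - y‖ + |α.im| * ‖x + y‖) ^ 2 / ‖α‖ ^ 2 := by
  have hr : 0 < ‖α‖ := norm_pos_iff.mpr hα
  have hc : ‖α / (‖α‖ : ℂ)‖ = 1 := by
    rw [norm_div, Complex.norm_real, Real.norm_of_nonneg hr.le, div_self hr.ne']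
  have h := norm_mul_norm_sub_re_sq_mul_inner_le hc x y
  rw [div_pow, Complex.div_ofReal_re, Complex.div_ofReal_im, abs_div, abs_div,
    abs_of_pos hr] at h
  refine h.trans_eq ?_
  field_simp
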